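/- For v ∈ (0,1), the function g(v) = H([v², 2v(1-v), (1-v)²]) / (2v(1-v)), where H is the Shannon entropy in bits of the probability vector (v², 2v(1-v), (1-v)²), attains its unique minimum at v = 1/2, where g(1/2) = 3. -/

import Mathlib

open Real

/-- Shannon entropy in bits of the probability vector `(v², 2v(1-v), (1-v)²)`. -/
noncomputable def splitEntropy (v : ℝ) : ℝ :=
  -(v ^ 2 * Real.logb 2 (v ^ 2) + 2 * v * (1 - v) * Real.logb 2 (2 * v * (1 - v)) +
    (1 - v) ^ 2 * Real.logb 2 ((1 - v) ^ 2))

/-!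
Measured in nats, `splitEntropy v` is `2 h(v) - 2 v (1 - v) log 2` with `h = binEntropy`, so
the claim is `4 log 2 · v (1 - v) < h(v)` for `v ≠ 1/2`, with equality at `1/2`. The ratio
`h(p) / (p (1 - p))` is strictly decreasing on `(0, 1/2]`: the numerator of its derivative is
`N(p) = (1 - p)² log (1 - p) - p² log p`, which vanishes at `0` and `1/2` and is strictly convex
in between because `N' = 2 h - 1` and `h` increases there; hence `N < 0` on `(0, 1/2)`.
The symmetry `p ↦ 1 - p` of `h` covers `v > 1/2`.
-/

open Set

namespace Real

theorem continuous_sq_mul_log : Continuous fun x => x ^ 2 * log x :=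
  (continuous_id.mul continuous_mul_log).congr fun x => by simp only [Pi.mul_apply, id]; ring

theorem hasDerivAt_sq_mul_log {x : ℝ} (hx : x ≠ 0) :
    HasDerivAt (fun x => x ^ 2 * log x) (2 * x * log x + x) x :=
  ((hasDerivAt_pow 2 x).mul (hasDerivAt_log hx)).congr_deriv (by field_simp; ring)

theorem hasDerivAt_sq_mul_log_one_sub_sub_sq_mul_log {p : ℝ} (hp₀ : p ≠ 0) (hp₁ : p ≠ 1) :
    HasDerivAt (fun p => (1 - p) ^ 2 * log (1 - p) - p ^ 2 * log p) (2 * binEntropy p - 1) p := by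
  refine (((hasDerivAt_sq_mul_log (sub_ne_zero.2 hp₁.symm)).comp p
    ((hasDerivAt_id p).const_sub 1)).sub (hasDerivAt_sq_mul_log hp₀)).congr_deriv ?_
  simp only [binEntropy, log_inv]
  ring

theorem strictConvexOn_sq_mul_log_one_sub_sub_sq_mul_log :
    StrictConvexOn ℝ (Icc 0 2⁻¹) (fun p => (1 - p) ^ 2 * log (1 - p) - p ^ 2 * log p) := by
  have hcont : Continuous fun p : ℝ => (1 - p) ^ 2 * log (1 - p) - p ^ 2 * log p :=
    (continuous_sq_mul_log.comp (continuous_const.sub continuous_id)).sub continuous_sq_mul_log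
  refine StrictMonoOn.strictConvexOn_of_deriv (convex_Icc _ _) hcont.continuousOn ?_
  rw [interior_Icc]
  have hderiv : EqOn (deriv fun p => (1 - p) ^ 2 * log (1 - p) - p ^ 2 * log p)
      (fun p => 2 * binEntropy p - 1) (Ioo 0 2⁻¹) := fun p hp =>
    (hasDerivAt_sq_mul_log_one_sub_sub_sq_mul_log hp.1.ne' (by linarith [hp.2])).deriv
  refine StrictMonoOn.congr ?_ hderiv.symm
  intro a ha b hb hab
  have := binEntropy_strictMonoOn (Ioo_subset_Icc_self ha) (Ioo_subset_Icc_self hb) hab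
  dsimp only
  linarith

theorem sq_mul_log_one_sub_lt_sq_mul_log {p : ℝ} (hp₀ : 0 < p) (hp : p < 2⁻¹) :
    (1 - p) ^ 2 * log (1 - p) < p ^ 2 * log p := by
  have h := strictConvexOn_sq_mul_log_one_sub_sub_sq_mul_log.2
    (show (0 : ℝ) ∈ Icc 0 2⁻¹ by norm_num) (show (2⁻¹ : ℝ) ∈ Icc 0 2⁻¹ by norm_num)
    (by norm_num) (show 0 < 1 - 2 * p by linarith) (show 0 < 2 * p by linarith) (by ring)
  norm_num at h
  rwa [show 2 * p * (1 / 2) = p by ring] at h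

theorem strictAntiOn_binEntropy_div :
    StrictAntiOn (fun p => binEntropy p / (p * (1 - p))) (Ioc 0 2⁻¹) := by
  refine strictAntiOn_of_deriv_neg (convex_Ioc _ _) ?_ ?_
  · refine binEntropy_continuous.continuousOn.div (by fun_prop) fun p hp => ?_
    exact mul_ne_zero hp.1.ne' (sub_pos.2 (by linarith [hp.2])).ne'
  · rw [interior_Ioc]
    intro p ⟨hp₀, hp⟩
    have hq : HasDerivAt (fun p : ℝ => p * (1 - p)) (1 - 2 * p) p := by
      refine ((hasDerivAt_id p).mul ((hasDerivAt_id p).const_sub 1)).congr_deriv ?_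
      simp only [id, mul_neg, mul_one, one_mul]; ring
    have hpq : p * (1 - p) ≠ 0 := by nlinarith
    have hr : HasDerivAt (fun p => binEntropy p / (p * (1 - p))) _ p :=
      (hasDerivAt_binEntropy hp₀.ne' (by linarith)).div hq hpq
    rw [hr.deriv]
    have hN := sq_mul_log_one_sub_lt_sq_mul_log hp₀ hp
    apply div_neg_of_neg_of_pos _ (by positivity)
    simp only [binEntropy, log_inv]
    linarith

theorem four_mul_log_two_mul_lt_binEntropy {p : ℝ} (hp₀ : 0 < p) (hp₁ : p < 1) (hp : p ≠ 2⁻¹) :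
    4 * log 2 * (p * (1 - p)) < binEntropy p := by
  wlog hp_lt : p < 2⁻¹ generalizing p
  · have h := this (p := 1 - p) (by linarith) (by linarith) (by contrapose! hp; linarith)
      (by linarith [lt_of_le_of_ne (not_lt.1 hp_lt) hp.symm])
    rwa [binEntropy_one_sub, sub_sub_cancel, mul_comm (1 - p)] at h
  have hpq : 0 < p * (1 - p) := mul_pos hp₀ (by linarith)
  have h : binEntropy 2⁻¹ / (2⁻¹ * (1 - 2⁻¹)) < binEntropy p / (p * (1 - p)) :=
    strictAntiOn_binEntropy_div ⟨hp₀, hp_lt.le⟩ ⟨by norm_num, le_rfl⟩ hp_lt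
  rw [binEntropy_two_inv, lt_div_iff₀ hpq] at h
  norm_num at h
  linarith

end Real

theorem splitEntropy_eq (v : ℝ) :
    splitEntropy v = 2 * binEntropy v / log 2 - 2 * v * (1 - v) := by
  have hlog : 2 * v * (1 - v) * log (2 * v * (1 - v)) =
      2 * v * (1 - v) * (log 2 + log v + log (1 - v)) := by
    rcases eq_or_ne v 0 with rfl | hv₀
    · simp
    rcases eq_or_ne v 1 with rfl | hv₁
    · simp
    rw [log_mul (by positivity) (sub_ne_zero.2 hv₁.symm), log_mul two_ne_zero hv₀]
  have hl2 : log 2 ≠ 0 := (log_pos one_lt_two).ne'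
  simp only [splitEntropy, logb, binEntropy, log_inv, log_pow, ← mul_div_assoc, hlog]
  field_simp
  ring

theorem splitEntropy_div_eq {v : ℝ} (hv₀ : 0 < v) (hv₁ : v < 1) :
    splitEntropy v / (2 * v * (1 - v)) = binEntropy v / (log 2 * (v * (1 - v))) - 1 := by
  have : 0 < 1 - v := by linarith
  have hl2 : 0 < log 2 := log_pos one_lt_two
  rw [splitEntropy_eq]
  field_simp

theorem three_lt_splitEntropy_div {v : ℝ} (hv₀ : 0 < v) (hv₁ : v < 1) (hv : v ≠ 2⁻¹) :
    3 < splitEntropy v / (2 * v * (1 - v)) := by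
  have hpq : 0 < log 2 * (v * (1 - v)) := mul_pos (log_pos one_lt_two) (mul_pos hv₀ (by linarith))
  rw [splitEntropy_div_eq hv₀ hv₁, lt_sub_iff_add_lt, lt_div_iff₀ hpq]
  linarith [four_mul_log_two_mul_lt_binEntropy hv₀ hv₁ hv]

theorem stmt3 :
    splitEntropy (1 / 2) / (2 * (1 / 2 : ℝ) * (1 - 1 / 2)) = 3 ∧
    ∀ v ∈ Set.Ioo (0 : ℝ) 1,
      3 ≤ splitEntropy v / (2 * v * (1 - v)) ∧
      (splitEntropy v / (2 * v * (1 - v)) = 3 ↔ v = 1 / 2) := by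
  have half : splitEntropy (1 / 2) / (2 * (1 / 2 : ℝ) * (1 - 1 / 2)) = 3 := by
    rw [splitEntropy_div_eq (by norm_num) (by norm_num), one_div, binEntropy_two_inv]
    field_simp
    norm_num
  refine ⟨half, fun v ⟨hv₀, hv₁⟩ => ?_⟩
  rcases eq_or_ne v (1 / 2) with rfl | hv
  · exact ⟨half.ge, iff_of_true half rfl⟩
  · have h := three_lt_splitEntropy_div hv₀ hv₁ (by rwa [← one_div])
    exact ⟨h.le, iff_of_false h.ne' hv⟩
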